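/- arXiv:2412.03996 — 2 statements merged into one kernel-verified Lean document; each statement's English description precedes it below -/
import Mathlib

section
/- G*₋₁(x,y) = 1 if and only if (x,y) ∈ {(2n, 2n+1) : n ≥ 2} ∪ {(2n+1, 2n) : n ≥ 2} ∪ {(0,2),(1,3),(2,0),(3,1)}. -/
/-- mex of a finite set of integers: least nonnegative integer not in the set
(negative elements are ignored). -/
noncomputable def mexZ (S : Finset ℤ) : ℤ := ((sInf {n : ℕ | (n : ℤ) ∉ S} : ℕ) : ℤ)

/-- `G*₋₁(x,y)`: `G*₋₁(0,0) = 0`, `G*₋₁(0,1) = G*₋₁(1,0) = -1`, and for `x + y > 1`,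
`G*₋₁(x,y) = mex({G*₋₁(x',y) : x' < x} ∪ {G*₋₁(x,y') : y' < y})`. -/
noncomputable def Gs : ℕ → ℕ → ℤ
  | x, y =>
    if x + y = 0 then 0 else if x + y = 1 then -1 else
    mexZ (((Finset.range x).attach.image fun x' => Gs x'.1 y) ∪
          ((Finset.range y).attach.image fun y' => Gs x y'.1))
termination_by x y => x + y
decreasing_by
  · have := x'.2; simp only [Finset.mem_range] at this; omega
  · have := y'.2; simp only [Finset.mem_range] at this; omega

/-- The claimed set of positions with value 1, in quantifier-free form. -/
def GPred (x y : ℕ) : Prop :=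
  (x % 2 = 0 ∧ 4 ≤ x ∧ y = x + 1) ∨ (y % 2 = 0 ∧ 4 ≤ y ∧ x = y + 1) ∨
  (x = 0 ∧ y = 2) ∨ (x = 1 ∧ y = 3) ∨ (x = 2 ∧ y = 0) ∨ (x = 3 ∧ y = 1)

lemma g02 : GPred 0 2 := Or.inr (Or.inr (Or.inl ⟨rfl, rfl⟩))
lemma g13 : GPred 1 3 := Or.inr (Or.inr (Or.inr (Or.inl ⟨rfl, rfl⟩)))
lemma g20 : GPred 2 0 := Or.inr (Or.inr (Or.inr (Or.inr (Or.inl ⟨rfl, rfl⟩))))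
lemma g31 : GPred 3 1 := Or.inr (Or.inr (Or.inr (Or.inr (Or.inr ⟨rfl, rfl⟩))))
lemma gev (m : ℕ) (h : 2 ≤ m) : GPred (2*m) (2*m+1) := Or.inl ⟨by omega, by omega, rfl⟩
lemma god (m : ℕ) (h : 2 ≤ m) : GPred (2*m+1) (2*m) := Or.inr (Or.inl ⟨by omega, by omega, rfl⟩)

lemma gne (x y : ℕ) (h : GPred x y) : x ≠ y := by
  rcases h with ⟨u1,u2,u3⟩|⟨u1,u2,u3⟩|⟨u1,u2⟩|⟨u1,u2⟩|⟨u1,u2⟩|⟨u1,u2⟩ <;> omega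

/-- A `GPred` position has no `GPred` predecessor in its row or column. -/
lemma comb_fwd (x y : ℕ) (hQ : GPred x y) :
    ¬ ((∃ x' < x, GPred x' y) ∨ (∃ y' < y, GPred x y')) := by
  rintro (⟨a, ha, h⟩ | ⟨a, ha, h⟩) <;>
    rcases hQ with ⟨u1,u2,u3⟩|⟨u1,u2,u3⟩|⟨u1,u2⟩|⟨u1,u2⟩|⟨u1,u2⟩|⟨u1,u2⟩ <;>
    rcases h with ⟨v1,v2,v3⟩|⟨v1,v2,v3⟩|⟨v1,v2⟩|⟨v1,v2⟩|⟨v1,v2⟩|⟨v1,v2⟩ <;>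
    omega

/-- An off-diagonal position with no `GPred` predecessor is itself `GPred`. -/
lemma comb_bwd (x y : ℕ) (h2 : 2 ≤ x + y) (hne : x ≠ y)
    (hp1 : ∀ a < x, ¬ GPred a y) (hp2 : ∀ b < y, ¬ GPred x b) : GPred x y := by
  rcases Nat.lt_or_ge x y with hlt | hlt
  · rcases Nat.lt_or_ge x 4 with h4 | h4
    · interval_cases x
      · rcases eq_or_ne y 2 with rfl | hy
        · exact g02
        · exact absurd g02 (hp2 2 (by omega))
      · rcases eq_or_ne y 3 with rfl | hy
        · exact g13
        · rcases eq_or_ne y 2 with rfl | hy2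
          · exact absurd g02 (hp1 0 (by omega))
          · exact absurd g13 (hp2 3 (by omega))
      · exact absurd g20 (hp2 0 (by omega))
      · exact absurd g31 (hp2 1 (by omega))
    · rcases Nat.even_or_odd x with ⟨m, hm⟩ | ⟨m, hm⟩
      · have hm' : x = 2 * m := by omega
        subst hm'
        rcases eq_or_ne y (2*m + 1) with rfl | hy
        · exact gev m (by omega)
        · exact absurd (gev m (by omega)) (hp2 (2*m+1) (by omega))
      · have hm' : x = 2 * m + 1 := by omega
        subst hm'
        exact absurd (god m (by omega)) (hp2 (2*m) (by omega))
  · rcases Nat.lt_or_ge y 4 with h4 | h4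
    · interval_cases y
      · rcases eq_or_ne x 2 with rfl | hx
        · exact g20
        · exact absurd g20 (hp1 2 (by omega))
      · rcases eq_or_ne x 3 with rfl | hx
        · exact g31
        · rcases eq_or_ne x 2 with rfl | hx2
          · exact absurd g20 (hp2 0 (by omega))
          · exact absurd g31 (hp1 3 (by omega))
      · exact absurd g02 (hp1 0 (by omega))
      · exact absurd g13 (hp1 1 (by omega))
    · rcases Nat.even_or_odd y with ⟨m, hm⟩ | ⟨m, hm⟩
      · have hm' : y = 2 * m := by omega
        subst hm'
        rcases eq_or_ne x (2*m + 1) with rfl | hx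
        · exact god m (by omega)
        · exact absurd (god m (by omega)) (hp1 (2*m+1) (by omega))
      · have hm' : y = 2 * m + 1 := by omega
        subst hm'
        exact absurd (gev m (by omega)) (hp1 (2*m) (by omega))

lemma mexZ_nonempty (S : Finset ℤ) : {n : ℕ | (n : ℤ) ∉ S}.Nonempty := by
  refine ⟨(S.image Int.natAbs).sup id + 1, fun h => ?_⟩
  have := Finset.le_sup (f := id) (Finset.mem_image_of_mem Int.natAbs h)
  simp at this; omega

lemma mexZ_eq_zero_iff (S : Finset ℤ) : mexZ S = 0 ↔ (0 : ℤ) ∉ S := by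
  unfold mexZ
  rw [Int.natCast_eq_zero]
  constructor
  · intro h
    have h0 := Nat.sInf_mem (mexZ_nonempty S)
    rw [h] at h0
    simpa using h0
  · intro h
    exact Nat.sInf_eq_zero.mpr (Or.inl (by simpa using h))

lemma mexZ_eq_one_iff (S : Finset ℤ) : mexZ S = 1 ↔ (0 : ℤ) ∈ S ∧ (1 : ℤ) ∉ S := by
  unfold mexZ
  rw [show ((sInf {n : ℕ | (n : ℤ) ∉ S} : ℕ) : ℤ) = 1 ↔ sInf {n : ℕ | (n : ℤ) ∉ S} = 1 by
    exact_mod_cast Nat.cast_inj (R := ℤ) (m := _) (n := 1)]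
  constructor
  · intro h
    have h1 := Nat.sInf_mem (mexZ_nonempty S)
    rw [h] at h1
    have h0 : 0 ∉ {n : ℕ | (n : ℤ) ∉ S} := Nat.notMem_of_lt_sInf (by omega)
    simp only [Set.mem_setOf_eq, not_not] at h0 h1 ⊢
    exact ⟨by simpa using h0, by simpa using h1⟩
  · rintro ⟨h0, h1⟩
    have le : sInf {n : ℕ | (n : ℤ) ∉ S} ≤ 1 := Nat.sInf_le (by simpa using h1)
    have ne0 : sInf {n : ℕ | (n : ℤ) ∉ S} ≠ 0 := by
      intro h
      have := Nat.sInf_mem (mexZ_nonempty S)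
      rw [h] at this
      simp only [Set.mem_setOf_eq, Nat.cast_zero] at this
      exact this h0
    omega

lemma mem_S_iff (x y : ℕ) (c : ℤ) :
    c ∈ (((Finset.range x).attach.image fun x' => Gs x'.1 y) ∪
          ((Finset.range y).attach.image fun y' => Gs x y'.1)) ↔
      (∃ x' < x, Gs x' y = c) ∨ (∃ y' < y, Gs x y' = c) := by
  simp only [Finset.mem_union, Finset.mem_image, Finset.mem_attach, true_and,
    Subtype.exists, Finset.mem_range]
  constructor
  · rintro (⟨a, ha, h⟩ | ⟨a, ha, h⟩)
    · exact Or.inl ⟨a, ha, h⟩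
    · exact Or.inr ⟨a, ha, h⟩
  · rintro (⟨a, ha, h⟩ | ⟨a, ha, h⟩)
    · exact Or.inl ⟨a, ha, h⟩
    · exact Or.inr ⟨a, ha, h⟩

lemma Gs_main : ∀ n x y : ℕ, x + y = n →
    ((Gs x y = 0 ↔ x = y) ∧ (Gs x y = 1 ↔ GPred x y)) := by
  intro n
  induction n using Nat.strong_induction_on with
  | _ n ih =>
    intro x y hn
    rcases Nat.lt_or_ge (x + y) 2 with h2 | h2
    · rw [Gs]
      rcases Nat.lt_or_ge (x + y) 1 with h1 | h1
      · rw [if_pos (by omega)]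
        constructor
        · constructor <;> intro <;> omega
        · unfold GPred; constructor <;> intro h <;> omega
      · rw [if_neg (by omega), if_pos (by omega)]
        constructor
        · constructor <;> intro <;> omega
        · unfold GPred; constructor <;> intro h <;> omega
    · rw [Gs, if_neg (by omega), if_neg (by omega)]
      have IH : ∀ a b : ℕ, a + b < x + y →
          ((Gs a b = 0 ↔ a = b) ∧ (Gs a b = 1 ↔ GPred a b)) := by
        intro a b hab
        exact ih (a + b) (by omega) a b rfl
      have h0mem : (0 : ℤ) ∈ (((Finset.range x).attach.image fun x' => Gs x'.1 y) ∪
          ((Finset.range y).attach.image fun y' => Gs x y'.1)) ↔ x ≠ y := by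
        rw [mem_S_iff]
        constructor
        · rintro (⟨a, ha, h⟩ | ⟨a, ha, h⟩)
          · have := (IH a y (by omega)).1.mp h; omega
          · have := (IH x a (by omega)).1.mp h; omega
        · intro hne
          rcases Nat.lt_or_ge x y with h | h
          · exact Or.inr ⟨x, by omega, (IH x x (by omega)).1.mpr rfl⟩
          · exact Or.inl ⟨y, by omega, (IH y y (by omega)).1.mpr rfl⟩
      have h1mem : (1 : ℤ) ∈ (((Finset.range x).attach.image fun x' => Gs x'.1 y) ∪
          ((Finset.range y).attach.image fun y' => Gs x y'.1)) ↔
          ((∃ x' < x, GPred x' y) ∨ (∃ y' < y, GPred x y')) := by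
        rw [mem_S_iff]
        constructor
        · rintro (⟨a, ha, h⟩ | ⟨a, ha, h⟩)
          · exact Or.inl ⟨a, ha, (IH a y (by omega)).2.mp h⟩
          · exact Or.inr ⟨a, ha, (IH x a (by omega)).2.mp h⟩
        · rintro (⟨a, ha, h⟩ | ⟨a, ha, h⟩)
          · exact Or.inl ⟨a, ha, (IH a y (by omega)).2.mpr h⟩
          · exact Or.inr ⟨a, ha, (IH x a (by omega)).2.mpr h⟩
      constructor
      · rw [mexZ_eq_zero_iff, h0mem]
        constructor <;> intro h <;> omega
      · rw [mexZ_eq_one_iff, h0mem, h1mem]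
        constructor
        · rintro ⟨hne, hpred⟩
          exact comb_bwd x y h2 hne
            (fun a ha hQ => hpred (Or.inl ⟨a, ha, hQ⟩))
            (fun b hb hQ => hpred (Or.inr ⟨b, hb, hQ⟩))
        · intro hQ
          exact ⟨gne x y hQ, comb_fwd x y hQ⟩

theorem Gs_eq_one_iff (x y : ℕ) :
    Gs x y = 1 ↔
      ((∃ n : ℕ, 2 ≤ n ∧ ((x = 2 * n ∧ y = 2 * n + 1) ∨ (x = 2 * n + 1 ∧ y = 2 * n))) ∨
        (x, y) = (0, 2) ∨ (x, y) = (1, 3) ∨ (x, y) = (2, 0) ∨ (x, y) = (3, 1)) := by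
  rw [(Gs_main (x + y) x y rfl).2]
  simp only [Prod.mk.injEq]
  constructor
  · intro h
    rcases h with ⟨h1, h2, h3⟩ | ⟨h1, h2, h3⟩ | ⟨h1, h2⟩ | ⟨h1, h2⟩ | ⟨h1, h2⟩ | ⟨h1, h2⟩
    · exact Or.inl ⟨x / 2, by omega, Or.inl ⟨by omega, by omega⟩⟩
    · exact Or.inl ⟨y / 2, by omega, Or.inr ⟨by omega, by omega⟩⟩
    · exact Or.inr (Or.inl ⟨h1, h2⟩)
    · exact Or.inr (Or.inr (Or.inl ⟨h1, h2⟩))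
    · exact Or.inr (Or.inr (Or.inr (Or.inl ⟨h1, h2⟩)))
    · exact Or.inr (Or.inr (Or.inr (Or.inr ⟨h1, h2⟩)))
  · rintro (⟨n, hn, ⟨rfl, rfl⟩ | ⟨rfl, rfl⟩⟩ | ⟨rfl, rfl⟩ | ⟨rfl, rfl⟩ | ⟨rfl, rfl⟩ | ⟨rfl, rfl⟩)
    · exact gev n hn
    · exact god n hn
    · exact g02
    · exact g13
    · exact g20
    · exact g31
end

section
/- For all nonnegative integers n and m, G*₋₁(2n, 2m) = G*₋₁(2n+1, 2m+1) and G*₋₁(2n+1, 2m) = G*₋₁(2n, 2m+1). -/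
lemma attach_image_eq (s : Finset ℕ) (f : ℕ → ℤ) :
    s.attach.image (fun x => f x.1) = s.image f := by
  ext z; simp

lemma mexZ_spec (S : Finset ℤ) : {n : ℕ | (n:ℤ) ∉ S}.Nonempty := by
  refine ⟨S.sup Int.toNat + 1, fun h => ?_⟩
  have h2 := Finset.le_sup (f := Int.toNat) h
  simp only [Int.toNat_natCast] at h2
  omega

lemma mexZ_not_mem (S : Finset ℤ) : mexZ S ∉ S := Nat.sInf_mem (mexZ_spec S)

lemma mexZ_insert (S : Finset ℤ) (a : ℤ) (h : a ≠ mexZ S) :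
    mexZ (insert a S) = mexZ S := by
  have key : sInf {n : ℕ | (n:ℤ) ∉ insert a S} = sInf {n : ℕ | (n:ℤ) ∉ S} := by
    apply le_antisymm
    · apply Nat.sInf_le
      have h1 : ((sInf {n : ℕ | (n:ℤ) ∉ S} : ℕ) : ℤ) ∉ S := Nat.sInf_mem (mexZ_spec S)
      show ((sInf {n : ℕ | (n:ℤ) ∉ S} : ℕ) : ℤ) ∉ insert a S
      simp only [Finset.mem_insert, not_or]
      exact ⟨fun he => h he.symm, h1⟩
    · apply Nat.sInf_le
      have h1 : ((sInf {n : ℕ | (n:ℤ) ∉ insert a S} : ℕ) : ℤ) ∉ insert a S :=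
        Nat.sInf_mem (mexZ_spec (insert a S))
      show ((sInf {n : ℕ | (n:ℤ) ∉ insert a S} : ℕ) : ℤ) ∉ S
      exact fun hc => h1 (Finset.mem_insert_of_mem hc)
  unfold mexZ
  rw [key]

lemma mexZ_eq_zero (S : Finset ℤ) (h : (0:ℤ) ∉ S) : mexZ S = 0 := by
  unfold mexZ
  norm_cast
  exact Nat.sInf_eq_zero.mpr (Or.inl (by simpa using h))

lemma Gs_eq (x y : ℕ) (h : 2 ≤ x + y) :
    Gs x y = mexZ ((Finset.range x).image (fun x' => Gs x' y) ∪
                   (Finset.range y).image (fun y' => Gs x y')) := by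
  rw [Gs, if_neg (by omega), if_neg (by omega)]
  congr 1
  ext z
  simp

lemma Gs00 : Gs 0 0 = 0 := by rw [Gs]; norm_num
lemma Gs10 : Gs 1 0 = -1 := by rw [Gs]; norm_num
lemma Gs01 : Gs 0 1 = -1 := by rw [Gs]; norm_num
lemma Gs11 : Gs 1 1 = 0 := by
  rw [Gs_eq 1 1 (by norm_num)]
  simp [Finset.range_one, Gs01, Gs10]
  exact mexZ_eq_zero _ (by simp)

lemma pair_image (f g : ℕ → ℤ) :
    ∀ k, (∀ j, j < k → f (2*j) = g (2*j+1) ∧ f (2*j+1) = g (2*j)) →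
    (Finset.range (2*k)).image f = (Finset.range (2*k)).image g := by
  intro k
  induction k with
  | zero => simp
  | succ k ih =>
    intro h
    have h2 : 2*(k+1) = (2*k+1)+1 := by ring
    rw [h2, Finset.range_add_one, Finset.range_add_one]
    simp only [Finset.image_insert]
    rw [ih (fun j hj => h j (by omega)), (h k (by omega)).1, (h k (by omega)).2]
    apply Finset.ext
    intro z
    simp only [Finset.mem_insert]
    tauto

lemma key : ∀ N n m : ℕ, n + m ≤ N →
    (Gs (2*n) (2*m) = Gs (2*n+1) (2*m+1) ∧ Gs (2*n+1) (2*m) = Gs (2*n) (2*m+1)) := by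
  intro N
  induction N with
  | zero =>
    intro n m h
    have hn : n = 0 := by omega
    have hm : m = 0 := by omega
    subst hn; subst hm
    norm_num [Gs00, Gs10, Gs01, Gs11]
  | succ N ih =>
    intro n m h
    by_cases h0 : n + m = 0
    · have hn : n = 0 := by omega
      have hm : m = 0 := by omega
      subst hn; subst hm
      norm_num [Gs00, Gs10, Gs01, Gs11]
    have IH : ∀ a b : ℕ, a + b < n + m →
        (Gs (2*a) (2*b) = Gs (2*a+1) (2*b+1) ∧ Gs (2*a+1) (2*b) = Gs (2*a) (2*b+1)) :=
      fun a b hab => ih a b (by omega)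
    have hA : (Finset.range (2*n)).image (fun j => Gs j (2*m)) =
        (Finset.range (2*n)).image (fun j => Gs j (2*m+1)) := by
      apply pair_image _ _ n
      intro j hj
      exact ⟨(IH j m (by omega)).1, (IH j m (by omega)).2⟩
    have hB : (Finset.range (2*m)).image (fun j => Gs (2*n+1) j) =
        (Finset.range (2*m)).image (fun j => Gs (2*n) j) := by
      apply pair_image _ _ m
      intro j hj
      exact ⟨(IH n j (by omega)).2, (IH n j (by omega)).1.symm⟩
    have e2 : Gs (2*n+1) (2*m) = Gs (2*n) (2*m+1) := by
      rw [Gs_eq _ _ (by omega), Gs_eq _ _ (by omega)]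
      congr 1
      rw [Finset.range_add_one (n := 2*n), Finset.range_add_one (n := 2*m)]
      simp only [Finset.image_insert]
      rw [hA, hB, Finset.insert_union, Finset.union_insert]
    refine ⟨?_, e2⟩
    have hmem : Gs (2*n) (2*m) ∈
        ((Finset.range (2*n+1)).image (fun x' => Gs x' (2*m)) ∪
         (Finset.range (2*m)).image (fun y' => Gs (2*n+1) y')) :=
      Finset.mem_union.mpr (Or.inl (Finset.mem_image.mpr
        ⟨2*n, Finset.mem_range.mpr (by omega), rfl⟩))
    have hnmem : Gs (2*n+1) (2*m) ∉
        ((Finset.range (2*n+1)).image (fun x' => Gs x' (2*m)) ∪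
         (Finset.range (2*m)).image (fun y' => Gs (2*n+1) y')) := by
      rw [Gs_eq _ _ (by omega)]
      exact mexZ_not_mem _
    have hb : Gs (2*n+1) (2*m) ≠ Gs (2*n) (2*m) := fun he => hnmem (he ▸ hmem)
    rw [Gs_eq (2*n) (2*m) (by omega), Gs_eq (2*n+1) (2*m+1) (by omega)]
    rw [Finset.range_add_one (n := 2*n), Finset.range_add_one (n := 2*m)]
    simp only [Finset.image_insert]
    rw [← hA, hB, ← e2, Finset.insert_union, Finset.union_insert, Finset.insert_idem]
    refine (mexZ_insert _ _ ?_).symm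
    rw [← Gs_eq (2*n) (2*m) (by omega)]
    exact hb

theorem Gs_two_by_two_blocks (n m : ℕ) :
    Gs (2 * n) (2 * m) = Gs (2 * n + 1) (2 * m + 1) ∧
    Gs (2 * n + 1) (2 * m) = Gs (2 * n) (2 * m + 1) := key (n+m) n m le_rfl
end
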